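/- arXiv:2003.08198 — 5 statements merged into one kernel-verified Lean document; each statement's English description precedes it below -/
import Mathlib

section
/- For any function u in L^1_loc(R^d), any exponents q>0 and p>0, and any points x,y in R^d with 2|x-y| ≤ r < 1/10, one has min(1,|u(y)-u(x)|^q) ≤ C(p,q,d) · log(1/r)^{-p} · (G(r,x)+G(r,y)), where G(r,z) := ∫_{r≤|h|≤r^{1/2}} min(1,|u(z+h)-u(z)|^q) / (|h|^d · log(1/|h|)^{1-p}) dh. -/
/-
For `h` in the inner annulus `r^(3/4) ≤ ‖h‖ ≤ r^(2/3)`, the triangle inequality through the point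
`x + h = y + (h + (x - y))` bounds `min 1 (|u y - u x|^q)` by `2^q` times the sum of the truncated
increments of `u` at `x` with step `h` and at `y` with step `h + (x - y)`. As `‖x - y‖ ≤ r/2`, the
shifted step stays in the annulus `r ≤ ‖h‖ ≤ r^(1/2)` and the weight `‖h‖^(-d) log(1/‖h‖)^(p-1)`
changes by at most a constant factor. Integrating against this weight over the inner annulus, whose
total weight is, in polar coordinates, a constant multiple of `log(1/r)^p`, gives the estimate.
-/

open MeasureTheory Real Set Metric Module

noncomputable def logWeight (d p t : ℝ) : ℝ := (t ^ d * log (1 / t) ^ (1 - p))⁻¹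

def closedAnnulus {E : Type*} [Norm E] (r R : ℝ) : Set E := {h | r ≤ ‖h‖ ∧ ‖h‖ ≤ R}

lemma log_one_div_nonneg {t : ℝ} (ht0 : 0 ≤ t) (ht1 : t ≤ 1) : 0 ≤ log (1 / t) := by
  rw [one_div, log_inv, neg_nonneg]
  exact log_nonpos ht0 ht1

lemma log_one_div_pos {t : ℝ} (ht0 : 0 < t) (ht1 : t < 1) : 0 < log (1 / t) := by
  rw [one_div, log_inv, neg_pos]
  exact log_neg ht0 ht1

lemma log_one_div_le_two_mul {s t : ℝ} (hs : 0 < s) (hst : s ^ 2 ≤ t) :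
    log (1 / t) ≤ 2 * log (1 / s) := by
  have ht : 0 < t := lt_of_lt_of_le (by positivity) hst
  rw [show 2 * log (1 / s) = log ((1 / s) ^ 2) by rw [log_pow]; norm_num, div_pow, one_pow]
  exact log_le_log (by positivity) (one_div_le_one_div_of_le (by positivity) hst)

lemma log_one_div_rpow {r : ℝ} (hr : 0 < r) (β : ℝ) : log (1 / r ^ β) = β * log (1 / r) := by
  rw [one_div, one_div, log_inv, log_inv, log_rpow hr, mul_neg]

lemma rpow_le_two_rpow_abs_mul {a b : ℝ} (ha : 0 < a) (hba : b ≤ 2 * a) (hab : a ≤ 2 * b)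
    (t : ℝ) : b ^ t ≤ 2 ^ |t| * a ^ t := by
  rcases le_total 0 t with ht | ht
  · rw [abs_of_nonneg ht, ← mul_rpow zero_le_two ha.le]
    exact rpow_le_rpow (by linarith) hba ht
  · rw [abs_of_nonpos ht, rpow_neg zero_le_two, ← inv_rpow zero_le_two,
      ← mul_rpow (by norm_num) ha.le]
    exact rpow_le_rpow_of_nonpos (by positivity) (by linarith) ht

lemma min_one_rpow_le_two_rpow_mul {q Δ c : ℝ} (hq : 0 ≤ q) (hΔ : 0 ≤ Δ) (hc : 0 ≤ c)
    (h : Δ ≤ 2 * c) : min 1 (Δ ^ q) ≤ 2 ^ q * min 1 (c ^ q) := by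
  rw [mul_min_of_nonneg _ _ (by positivity), mul_one, ← mul_rpow zero_le_two hc]
  exact min_le_min (one_le_rpow one_le_two hq) (rpow_le_rpow hΔ h hq)

lemma min_one_rpow_le_of_le_add {q Δ a b : ℝ} (hq : 0 ≤ q) (hΔ : 0 ≤ Δ) (ha : 0 ≤ a)
    (hb : 0 ≤ b) (h : Δ ≤ a + b) :
    min 1 (Δ ^ q) ≤ 2 ^ q * (min 1 (a ^ q) + min 1 (b ^ q)) := by
  have hna : 0 ≤ min 1 (a ^ q) := le_min zero_le_one (rpow_nonneg ha q)
  have hnb : 0 ≤ min 1 (b ^ q) := le_min zero_le_one (rpow_nonneg hb q)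
  rcases le_total a b with hab | hab
  · calc min 1 (Δ ^ q) ≤ 2 ^ q * min 1 (b ^ q) :=
          min_one_rpow_le_two_rpow_mul hq hΔ hb (by linarith)
      _ ≤ _ := by gcongr; linarith
  · calc min 1 (Δ ^ q) ≤ 2 ^ q * min 1 (a ^ q) :=
          min_one_rpow_le_two_rpow_mul hq hΔ ha (by linarith)
      _ ≤ _ := by gcongr; linarith

lemma logWeight_nonneg (d p : ℝ) {t : ℝ} (ht0 : 0 ≤ t) (ht1 : t ≤ 1) : 0 ≤ logWeight d p t :=
  inv_nonneg.2 (mul_nonneg (rpow_nonneg ht0 d) (rpow_nonneg (log_one_div_nonneg ht0 ht1) _))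

lemma continuousOn_logWeight (d p : ℝ) : ContinuousOn (logWeight d p) (Ioo 0 1) := by
  intro t ht
  have hℓ := log_one_div_pos ht.1 ht.2
  apply ContinuousAt.continuousWithinAt
  show ContinuousAt (fun t => (t ^ d * log (1 / t) ^ (1 - p))⁻¹) t
  refine ContinuousAt.inv₀ ?_ (mul_pos (rpow_pos_of_pos ht.1 d) (rpow_pos_of_pos hℓ _)).ne'
  exact (continuousAt_id.rpow_const (Or.inl ht.1.ne')).mul
    ((continuousAt_const.div continuousAt_id ht.1.ne').log (one_div_pos.2 ht.1).ne' |>.rpow_const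
      (Or.inl hℓ.ne'))

lemma logWeight_le_mul_logWeight {d : ℝ} (hd : 0 ≤ d) (p : ℝ) {s t : ℝ} (hs : 0 < s)
    (hs4 : s ≤ 1 / 4) (hst : s ≤ 2 * t) (hts : t ≤ 2 * s) :
    logWeight d p s ≤ 2 ^ d * 2 ^ |1 - p| * logWeight d p t := by
  have ht : 0 < t := by linarith
  have hℓs : 0 < log (1 / s) := log_one_div_pos hs (by linarith)
  have hℓt : 0 < log (1 / t) := log_one_div_pos ht (by linarith)
  have hlog : log (1 / t) ^ (1 - p) ≤ 2 ^ |1 - p| * log (1 / s) ^ (1 - p) :=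
    rpow_le_two_rpow_abs_mul hℓs (log_one_div_le_two_mul hs (by nlinarith))
      (log_one_div_le_two_mul ht (by nlinarith)) _
  have hpow : t ^ d ≤ 2 ^ d * s ^ d := by
    rw [← mul_rpow zero_le_two hs.le]
    exact rpow_le_rpow ht.le hts hd
  rw [logWeight, logWeight, ← div_eq_mul_inv, inv_eq_one_div,
    div_le_div_iff₀ (by positivity) (by positivity), one_mul]
  calc t ^ d * log (1 / t) ^ (1 - p)
      ≤ (2 ^ d * s ^ d) * (2 ^ |1 - p| * log (1 / s) ^ (1 - p)) :=
        mul_le_mul hpow hlog (by positivity) (by positivity)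
    _ = 2 ^ d * 2 ^ |1 - p| * (s ^ d * log (1 / s) ^ (1 - p)) := by ring

lemma integral_log_one_div_rpow_div {p a b : ℝ} (hp : 0 < p) (ha : 0 < a) (hab : a ≤ b)
    (hb : b < 1) :
    ∫ t in a..b, log (1 / t) ^ (p - 1) / t = (log (1 / a) ^ p - log (1 / b) ^ p) / p := by
  have hIcc : ∀ t ∈ uIcc a b, 0 < t ∧ 0 < log (1 / t) := fun t ht => by
    rw [uIcc_of_le hab] at ht
    exact ⟨ha.trans_le ht.1, log_one_div_pos (ha.trans_le ht.1) (ht.2.trans_lt hb)⟩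
  have hderiv : ∀ t ∈ uIcc a b,
      HasDerivAt (fun t => -(log (1 / t) ^ p / p)) (log (1 / t) ^ (p - 1) / t) t := by
    intro t ht
    obtain ⟨ht0, hℓ⟩ := hIcc t ht
    have hlog : HasDerivAt (fun t => log (1 / t)) (-t⁻¹) t := by
      simp only [one_div, log_inv]
      exact (hasDerivAt_log ht0.ne').neg
    refine (((hasDerivAt_rpow_const (Or.inl hℓ.ne')).comp t hlog).div_const p).neg.congr_deriv ?_
    field_simp
  have hcont : ContinuousOn (fun t => log (1 / t) ^ (p - 1) / t) (uIcc a b) := by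
    refine ContinuousOn.div (ContinuousOn.rpow_const ?_ ?_) continuousOn_id ?_
    · exact (continuousOn_const.div continuousOn_id fun t ht => (hIcc t ht).1.ne').log
        fun t ht => (one_div_pos.2 (hIcc t ht).1).ne'
    · exact fun t ht => Or.inl (hIcc t ht).2.ne'
    · exact fun t ht => (hIcc t ht).1.ne'
  rw [intervalIntegral.integral_eq_sub_of_hasDerivAt hderiv hcont.intervalIntegrable]
  ring

lemma rpow_inv_natCast_le {r c : ℝ} {n : ℕ} (hr : 0 ≤ r) (hc : 0 ≤ c) (hn : n ≠ 0)
    (h : r ≤ c ^ n) : r ^ (n⁻¹ : ℝ) ≤ c := by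
  rw [rpow_inv_le_iff_of_pos hr hc (Nat.cast_pos.2 (Nat.pos_of_ne_zero hn)), rpow_natCast]
  exact h

lemma radii_of_lt_one_tenth {r : ℝ} (hr0 : 0 < r) (hr : r < 1 / 10) :
    3 / 2 * r ≤ r ^ (3 / 4 : ℝ) ∧ r ^ (2 / 3 : ℝ) + r / 2 ≤ r ^ (1 / 2 : ℝ) ∧
      r ^ (2 / 3 : ℝ) ≤ 1 / 4 := by
  have hroot4 : r ^ (4⁻¹ : ℝ) ≤ 2 / 3 :=
    rpow_inv_natCast_le (n := 4) hr0.le (by norm_num) (by norm_num) (by linarith)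
  have hroot6 : r ^ (6⁻¹ : ℝ) ≤ 3 / 4 :=
    rpow_inv_natCast_le (n := 6) hr0.le (by norm_num) (by norm_num) (by linarith)
  have hsqrt : r ^ (2⁻¹ : ℝ) ≤ 1 / 3 :=
    rpow_inv_natCast_le (n := 2) hr0.le (by norm_num) (by norm_num) (by linarith)
  have hr_eq : r = r ^ (3 / 4 : ℝ) * r ^ (4⁻¹ : ℝ) := by rw [← rpow_add hr0]; norm_num
  have hr23_eq : r ^ (2 / 3 : ℝ) = r ^ (2⁻¹ : ℝ) * r ^ (6⁻¹ : ℝ) := by rw [← rpow_add hr0]; norm_num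
  have hr_eq' : r = r ^ (2⁻¹ : ℝ) * r ^ (2⁻¹ : ℝ) := by rw [← rpow_add hr0]; norm_num
  have hpos34 := rpow_pos_of_pos hr0 (3 / 4 : ℝ)
  have hpos2 := rpow_pos_of_pos hr0 (2⁻¹ : ℝ)
  have hpos6 := rpow_pos_of_pos hr0 (6⁻¹ : ℝ)
  rw [one_div (2 : ℝ)]
  refine ⟨by nlinarith, by nlinarith, by nlinarith⟩

lemma le_div_mul_rpow_neg_mul {m c L A S p : ℝ} (hc : 0 < c) (hL : 0 < L)
    (h : m * (c * L ^ p) ≤ A * S) : m ≤ A / c * L ^ (-p) * S := by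
  rw [rpow_neg hL.le, show A / c * (L ^ p)⁻¹ * S = A * S / (c * L ^ p) by field_simp,
    le_div_iff₀ (by positivity)]
  exact h

section Annulus

variable {E : Type*} [NormedAddCommGroup E]

lemma isClosed_closedAnnulus (r R : ℝ) : IsClosed (closedAnnulus r R : Set E) :=
  (isClosed_le continuous_const continuous_norm).inter
    (isClosed_le continuous_norm continuous_const)

lemma closedAnnulus_subset_closedAnnulus {r R a b : ℝ} (hra : r ≤ a) (hbR : b ≤ R) :
    (closedAnnulus a b : Set E) ⊆ closedAnnulus r R :=
  fun _ hh => ⟨hra.trans hh.1, hh.2.trans hbR⟩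

lemma add_mem_closedAnnulus {r R a b : ℝ} {v h : E} (hv : ‖v‖ ≤ r / 2) (hra : 3 / 2 * r ≤ a)
    (hbR : b + r / 2 ≤ R) (hh : h ∈ closedAnnulus a b) :
    h + v ∈ closedAnnulus r R ∧ ‖h‖ ≤ 2 * ‖h + v‖ ∧ ‖h + v‖ ≤ 2 * ‖h‖ := by
  have hlow : ‖h‖ - ‖v‖ ≤ ‖h + v‖ := by simpa using norm_sub_norm_le h (-v)
  have hup : ‖h + v‖ ≤ ‖h‖ + ‖v‖ := norm_add_le h v
  obtain ⟨ha, hb⟩ := hh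
  exact ⟨⟨by linarith, by linarith⟩, by linarith, by linarith⟩

lemma min_one_rpow_mul_logWeight_le {u : E → ℝ} {d p q : ℝ} (hd : 0 ≤ d) (hq : 0 ≤ q)
    {x y h : E} (hh0 : 0 < ‖h‖) (hh4 : ‖h‖ ≤ 1 / 4) (hle : ‖h‖ ≤ 2 * ‖h + (x - y)‖)
    (hge : ‖h + (x - y)‖ ≤ 2 * ‖h‖) :
    min 1 (|u y - u x| ^ q) * logWeight d p ‖h‖ ≤
      2 ^ q * (min 1 (|u (x + h) - u x| ^ q) * logWeight d p ‖h‖ +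
        2 ^ d * 2 ^ |1 - p| *
          (min 1 (|u (y + (h + (x - y))) - u y| ^ q) * logWeight d p ‖h + (x - y)‖)) := by
  have hw := logWeight_le_mul_logWeight hd p hh0 hh4 hle hge
  have hdiff : |u y - u x| ≤ |u (x + h) - u x| + |u (y + (h + (x - y))) - u y| := by
    rw [show y + (h + (x - y)) = x + h by abel]
    simpa using abs_sub (u (x + h) - u x) (u (x + h) - u y)
  have hmin := min_one_rpow_le_of_le_add hq (abs_nonneg _) (abs_nonneg _) (abs_nonneg _) hdiff
  calc _ ≤ 2 ^ q * (min 1 (|u (x + h) - u x| ^ q) +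
        min 1 (|u (y + (h + (x - y))) - u y| ^ q)) * logWeight d p ‖h‖ :=
        mul_le_mul_of_nonneg_right hmin (logWeight_nonneg d p hh0.le (by linarith))
    _ = 2 ^ q * (min 1 (|u (x + h) - u x| ^ q) * logWeight d p ‖h‖ +
        min 1 (|u (y + (h + (x - y))) - u y| ^ q) * logWeight d p ‖h‖) := by ring
    _ ≤ 2 ^ q * (min 1 (|u (x + h) - u x| ^ q) * logWeight d p ‖h‖ +
        min 1 (|u (y + (h + (x - y))) - u y| ^ q) *
          (2 ^ d * 2 ^ |1 - p| * logWeight d p ‖h + (x - y)‖)) := by gcongr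
    _ = _ := by ring

variable [MeasurableSpace E]

lemma measurableSet_closedAnnulus [OpensMeasurableSpace E] (r R : ℝ) :
    MeasurableSet (closedAnnulus r R : Set E) :=
  (isClosed_closedAnnulus r R).measurableSet

lemma integrableOn_logWeight_closedAnnulus [OpensMeasurableSpace E] [ProperSpace E]
    {μ : Measure E} [IsFiniteMeasureOnCompacts μ] (d p : ℝ) {r R : ℝ} (hr : 0 < r) (hR : R < 1) :
    IntegrableOn (fun h => logWeight d p ‖h‖) (closedAnnulus r R) μ := by
  refine ContinuousOn.integrableOn_compact ((isCompact_closedBall 0 R).of_isClosed_subset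
    (isClosed_closedAnnulus r R) fun h hh => mem_closedBall_zero_iff.2 hh.2) ?_
  exact (continuousOn_logWeight d p).comp continuous_norm.continuousOn
    fun h hh => ⟨hr.trans_le hh.1, hh.2.trans_lt hR⟩

lemma aestronglyMeasurable_min_one_rpow_sub [MeasurableAdd E] {μ : Measure E}
    [μ.IsAddLeftInvariant] {u : E → ℝ} (hu : AEStronglyMeasurable u μ) (q : ℝ) (z : E) :
    AEStronglyMeasurable (fun h => min 1 (|u (z + h) - u z| ^ q)) μ := by
  have hshift : AEMeasurable (fun h => u (z + h)) μ := (hu.comp_quasiMeasurePreserving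
    (measurePreserving_add_left μ z).quasiMeasurePreserving).aemeasurable
  have hmin : Measurable fun t : ℝ => min 1 (|t| ^ q) := by fun_prop
  exact (hmin.comp_aemeasurable (hshift.sub_const _)).aestronglyMeasurable

lemma integrableOn_min_one_rpow_mul_logWeight [BorelSpace E] [ProperSpace E] {μ : Measure E}
    [IsFiniteMeasureOnCompacts μ] [μ.IsAddLeftInvariant] {u : E → ℝ}
    (hu : AEStronglyMeasurable u μ) (q d p : ℝ) (z : E) {r R : ℝ} (hr : 0 < r) (hR : R < 1) :
    IntegrableOn (fun h => min 1 (|u (z + h) - u z| ^ q) * logWeight d p ‖h‖)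
      (closedAnnulus r R) μ := by
  refine (integrableOn_logWeight_closedAnnulus d p hr hR).bdd_mul
    (aestronglyMeasurable_min_one_rpow_sub hu q z).restrict (c := 1) (ae_of_all _ fun h => ?_)
  rw [norm_of_nonneg (le_min zero_le_one (by positivity))]
  exact min_le_left _ _

lemma integral_min_one_rpow_mul_logWeight_nonneg {μ : Measure E} [OpensMeasurableSpace E]
    (u : E → ℝ) (q d p : ℝ) (z : E) (r : ℝ) {R : ℝ} (hR : R ≤ 1) :
    0 ≤ ∫ h in closedAnnulus r R, min 1 (|u (z + h) - u z| ^ q) * logWeight d p ‖h‖ ∂μ :=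
  setIntegral_nonneg (measurableSet_closedAnnulus r R) fun h hh =>
    mul_nonneg (le_min zero_le_one (by positivity))
      (logWeight_nonneg d p (norm_nonneg h) (hh.2.trans hR))

end Annulus

section Haar

variable {E : Type*} [NormedAddCommGroup E] [NormedSpace ℝ E] [MeasurableSpace E] [BorelSpace E]
  [FiniteDimensional ℝ E] {μ : Measure E} [μ.IsAddHaarMeasure]

lemma integral_closedAnnulus_logWeight [Nontrivial E] {p a b : ℝ} (hp : 0 < p) (ha : 0 < a)
    (hab : a ≤ b) (hb : b < 1) :
    ∫ h in closedAnnulus a b, logWeight (finrank ℝ E) p ‖h‖ ∂μ =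
      finrank ℝ E * μ.real (ball 0 1) * ((log (1 / a) ^ p - log (1 / b) ^ p) / p) := by
  have hpos : 0 < finrank ℝ E := finrank_pos
  have hradial : EqOn (fun t => t ^ (finrank ℝ E - 1) • logWeight (finrank ℝ E) p t)
      (fun t => log (1 / t) ^ (p - 1) / t) (Icc a b) := by
    intro t ht
    have ht0 : 0 < t := ha.trans_le ht.1
    have hℓ : 0 < log (1 / t) := log_one_div_pos ht0 (ht.2.trans_lt hb)
    have hpow : t ^ (finrank ℝ E : ℝ) = t ^ (finrank ℝ E - 1) * t := by
      rw [rpow_natCast, ← pow_succ, Nat.sub_add_cancel hpos]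
    simp only [logWeight, smul_eq_mul]
    rw [hpow, mul_inv, ← rpow_neg hℓ.le, neg_sub]
    field_simp
  rw [← integral_indicator (measurableSet_closedAnnulus a b)]
  change ∫ h, (Icc a b).indicator (logWeight (finrank ℝ E) p) ‖h‖ ∂μ = _
  rw [integral_fun_norm_addHaar μ]
  simp only [← indicator_smul_apply (Icc a b) (fun y : ℝ => y ^ (finrank ℝ E - 1))]
  rw [integral_indicator measurableSet_Icc, Measure.restrict_restrict measurableSet_Icc,
    inter_eq_left.2 fun t ht => mem_Ioi.2 (ha.trans_le ht.1),
    setIntegral_congr_fun measurableSet_Icc hradial, integral_Icc_eq_integral_Ioc,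
    ← intervalIntegral.integral_of_le hab, integral_log_one_div_rpow_div hp ha hab hb,
    nsmul_eq_mul, smul_eq_mul, mul_assoc]

lemma integral_closedAnnulus_rpow_logWeight [Nontrivial E] {p r α β : ℝ} (hp : 0 < p)
    (hr0 : 0 < r) (hr1 : r < 1) (hα : 0 < α) (hαβ : α ≤ β) :
    ∫ h in closedAnnulus (r ^ β) (r ^ α), logWeight (finrank ℝ E) p ‖h‖ ∂μ =
      finrank ℝ E * μ.real (ball 0 1) * ((β ^ p - α ^ p) / p) * log (1 / r) ^ p := by
  have hL := log_one_div_nonneg hr0.le hr1.le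
  rw [integral_closedAnnulus_logWeight hp (rpow_pos_of_pos hr0 β)
    (rpow_le_rpow_of_exponent_ge hr0 hr1.le hαβ) (rpow_lt_one hr0.le hr1 hα),
    log_one_div_rpow hr0, log_one_div_rpow hr0, mul_rpow (hα.le.trans hαβ) hL, mul_rpow hα.le hL]
  ring

theorem min_one_rpow_mul_integral_closedAnnulus_le {u : E → ℝ} (hu : AEStronglyMeasurable u μ)
    {d p q : ℝ} (hd : 0 ≤ d) (hq : 0 ≤ q) {x y : E} {r R a b : ℝ} (hr : 0 < r)
    (hxy : 2 * dist x y ≤ r) (hra : 3 / 2 * r ≤ a) (hbR : b + r / 2 ≤ R) (hb : b ≤ 1 / 4)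
    (hR : R < 1) :
    min 1 (|u y - u x| ^ q) * ∫ h in closedAnnulus a b, logWeight d p ‖h‖ ∂μ ≤
      2 ^ q * ((∫ h in closedAnnulus r R,
          min 1 (|u (x + h) - u x| ^ q) * logWeight d p ‖h‖ ∂μ) +
        2 ^ d * 2 ^ |1 - p| * ∫ h in closedAnnulus r R,
          min 1 (|u (y + h) - u y| ^ q) * logWeight d p ‖h‖ ∂μ) := by
  set K : ℝ := 2 ^ d * 2 ^ |1 - p|
  set G : E → E → ℝ := fun z => (closedAnnulus r R).indicator
    fun h => min 1 (|u (z + h) - u z| ^ q) * logWeight d p ‖h‖ with hG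
  have hG_int (z : E) : Integrable (G z) μ :=
    (integrable_indicator_iff (measurableSet_closedAnnulus r R)).2
      (integrableOn_min_one_rpow_mul_logWeight hu q d p z hr hR)
  have hG_nonneg (z h : E) : 0 ≤ G z h :=
    indicator_nonneg (fun h hh => mul_nonneg (le_min zero_le_one (by positivity))
      (logWeight_nonneg d p (norm_nonneg h) (hh.2.trans hR.le))) h
  have hF_int : Integrable (fun h => 2 ^ q * (G x h + K * G y (h + (x - y)))) μ :=
    ((hG_int x).add (((hG_int y).comp_add_right (x - y)).const_mul K)).const_mul _
  have hv : ‖x - y‖ ≤ r / 2 := by rw [← dist_eq_norm]; linarith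
  have hpoint : ∀ h ∈ closedAnnulus a b, min 1 (|u y - u x| ^ q) * logWeight d p ‖h‖ ≤
      2 ^ q * (G x h + K * G y (h + (x - y))) := by
    intro h hh
    obtain ⟨hmem, hle, hge⟩ := add_mem_closedAnnulus hv hra hbR hh
    have hA : h ∈ closedAnnulus r R :=
      closedAnnulus_subset_closedAnnulus (by linarith) (by linarith) hh
    simp only [hG, indicator_of_mem hA, indicator_of_mem hmem]
    exact min_one_rpow_mul_logWeight_le hd hq (by linarith [hh.1]) (hh.2.trans hb) hle hge
  calc min 1 (|u y - u x| ^ q) * ∫ h in closedAnnulus a b, logWeight d p ‖h‖ ∂μ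
      = ∫ h in closedAnnulus a b, min 1 (|u y - u x| ^ q) * logWeight d p ‖h‖ ∂μ :=
        (integral_const_mul _ _).symm
    _ ≤ ∫ h in closedAnnulus a b, 2 ^ q * (G x h + K * G y (h + (x - y))) ∂μ :=
        setIntegral_mono_on ((integrableOn_logWeight_closedAnnulus d p (by linarith)
          (by linarith)).const_mul _) hF_int.integrableOn (measurableSet_closedAnnulus a b) hpoint
    _ ≤ ∫ h, 2 ^ q * (G x h + K * G y (h + (x - y))) ∂μ :=
        setIntegral_le_integral hF_int (ae_of_all _ fun h => mul_nonneg (by positivity)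
          (add_nonneg (hG_nonneg x h) (mul_nonneg (by positivity) (hG_nonneg y _))))
    _ = 2 ^ q * (∫ h, G x h ∂μ + K * ∫ h, G y h ∂μ) := by
        rw [integral_const_mul, integral_add (hG_int x)
          (((hG_int y).comp_add_right (x - y)).const_mul K), integral_const_mul,
          integral_add_right_eq_self (G y)]
    _ = _ := by simp only [hG, integral_indicator (measurableSet_closedAnnulus r R)]

lemma min_one_rpow_mul_log_rpow_le [Nontrivial E] {u : E → ℝ} (hu : AEStronglyMeasurable u μ)
    {p q : ℝ} (hp : 0 < p) (hq : 0 ≤ q) {x y : E} {r : ℝ} (hr : 0 < r) (hxy : 2 * dist x y ≤ r)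
    (hr10 : r < 1 / 10) :
    min 1 (|u y - u x| ^ q) * (finrank ℝ E * μ.real (ball 0 1) *
        (((3 / 4 : ℝ) ^ p - (2 / 3 : ℝ) ^ p) / p) * log (1 / r) ^ p) ≤
      2 ^ q * (1 + 2 ^ (finrank ℝ E : ℝ) * 2 ^ |1 - p|) *
        ((∫ h in closedAnnulus r (r ^ ((1 : ℝ) / 2)),
            min 1 (|u (x + h) - u x| ^ q) * logWeight (finrank ℝ E) p ‖h‖ ∂μ) +
          ∫ h in closedAnnulus r (r ^ ((1 : ℝ) / 2)),
            min 1 (|u (y + h) - u y| ^ q) * logWeight (finrank ℝ E) p ‖h‖ ∂μ) := by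
  obtain ⟨hra, hbR, hb⟩ := radii_of_lt_one_tenth hr hr10
  have hR1 : r ^ ((1 : ℝ) / 2) < 1 := rpow_lt_one hr.le (by linarith) (by norm_num)
  have key := min_one_rpow_mul_integral_closedAnnulus_le (μ := μ) hu (d := finrank ℝ E) (p := p)
    (Nat.cast_nonneg _) hq hr hxy hra hbR hb hR1
  rw [← integral_closedAnnulus_rpow_logWeight hp hr (by linarith) (by norm_num) (by norm_num)]
  refine key.trans ?_
  have hGx := integral_min_one_rpow_mul_logWeight_nonneg (μ := μ) u q (finrank ℝ E) p x r hR1.le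
  have hGy := integral_min_one_rpow_mul_logWeight_nonneg (μ := μ) u q (finrank ℝ E) p y r hR1.le
  have hK : (0 : ℝ) ≤ 2 ^ (finrank ℝ E : ℝ) * 2 ^ |1 - p| := by positivity
  rw [mul_assoc (2 ^ q)]
  gcongr
  nlinarith

end Haar

theorem exists_min_one_rpow_le_log_rpow_mul_integral {E : Type*} [NormedAddCommGroup E]
    [NormedSpace ℝ E] [MeasurableSpace E] [BorelSpace E] [FiniteDimensional ℝ E] (μ : Measure E)
    [μ.IsAddHaarMeasure] {p q : ℝ} (hp : 0 < p) (hq : 0 < q) :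
    ∃ C : ℝ, 0 < C ∧ ∀ u : E → ℝ, AEStronglyMeasurable u μ → ∀ (x y : E) (r : ℝ),
      2 * dist x y ≤ r → r < 1 / 10 →
      min 1 (|u y - u x| ^ q) ≤ C * log (1 / r) ^ (-p) *
        ((∫ h in closedAnnulus r (r ^ ((1 : ℝ) / 2)),
            min 1 (|u (x + h) - u x| ^ q) * logWeight (finrank ℝ E) p ‖h‖ ∂μ) +
          ∫ h in closedAnnulus r (r ^ ((1 : ℝ) / 2)),
            min 1 (|u (y + h) - u y| ^ q) * logWeight (finrank ℝ E) p ‖h‖ ∂μ) := by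
  set A : ℝ := 2 ^ q * (1 + 2 ^ (finrank ℝ E : ℝ) * 2 ^ |1 - p|)
  set c : ℝ := finrank ℝ E * μ.real (ball 0 1) * (((3 / 4 : ℝ) ^ p - (2 / 3 : ℝ) ^ p) / p)
  -- `c = 0` in dimension zero, hence the `max`
  refine ⟨max 1 (A / c), lt_max_of_lt_left one_pos, fun u hu x y r hxy hr10 => ?_⟩
  have hr0 : 0 ≤ r := le_trans (by positivity) hxy
  have hR1 : r ^ ((1 : ℝ) / 2) ≤ 1 := rpow_le_one hr0 (by linarith) (by norm_num)
  have hGx := integral_min_one_rpow_mul_logWeight_nonneg (μ := μ) u q (finrank ℝ E) p x r hR1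
  have hGy := integral_min_one_rpow_mul_logWeight_nonneg (μ := μ) u q (finrank ℝ E) p y r hR1
  have hL : 0 ≤ log (1 / r) := log_one_div_nonneg hr0 (by linarith)
  rcases eq_or_ne x y with rfl | hne
  · rw [sub_self, abs_zero, zero_rpow hq.ne', min_eq_right zero_le_one]
    positivity
  have hr : 0 < r := (mul_pos two_pos (dist_pos.2 hne)).trans_le hxy
  have : Nontrivial E := nontrivial_of_ne x y hne
  have hc : 0 < c := by
    have : (2 / 3 : ℝ) ^ p < (3 / 4) ^ p := rpow_lt_rpow (by norm_num) (by norm_num) hp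
    have : 0 < μ.real (ball 0 1) :=
      ENNReal.toReal_pos (measure_ball_pos μ 0 one_pos).ne' measure_ball_lt_top.ne
    have : (0 : ℝ) < finrank ℝ E := Nat.cast_pos.2 finrank_pos
    have : 0 < (3 / 4 : ℝ) ^ p - (2 / 3) ^ p := by linarith
    positivity
  have hLp : 0 < log (1 / r) := log_one_div_pos hr (by linarith)
  refine (le_div_mul_rpow_neg_mul hc hLp
    (min_one_rpow_mul_log_rpow_le hu hp hq.le hr hxy hr10)).trans ?_
  exact mul_le_mul_of_nonneg_right (mul_le_mul_of_nonneg_right (le_max_right _ _)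
    (rpow_nonneg hL _)) (add_nonneg hGx hGy)

/-- Lusin-type log estimate (Proposition on log Lusin-Lipschitz). -/
theorem stmt0 (d : ℕ) (p q : ℝ) (hp : 0 < p) (hq : 0 < q) :
    ∃ C : ℝ, 0 < C ∧
      ∀ (u : EuclideanSpace ℝ (Fin d) → ℝ), LocallyIntegrable u volume →
      ∀ (x y : EuclideanSpace ℝ (Fin d)) (r : ℝ),
        2 * dist x y ≤ r → r < 1/10 →
        min 1 (|u y - u x| ^ q) ≤
          C * (Real.log (1/r)) ^ (-p) *
            ((∫ h in {h : EuclideanSpace ℝ (Fin d) | r ≤ ‖h‖ ∧ ‖h‖ ≤ r ^ ((1:ℝ)/2)},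
                min 1 (|u (x + h) - u x| ^ q) / (‖h‖ ^ (d:ℝ) * (Real.log (1/‖h‖)) ^ (1 - p))) +
             (∫ h in {h : EuclideanSpace ℝ (Fin d) | r ≤ ‖h‖ ∧ ‖h‖ ≤ r ^ ((1:ℝ)/2)},
                min 1 (|u (y + h) - u y| ^ q) / (‖h‖ ^ (d:ℝ) * (Real.log (1/‖h‖)) ^ (1 - p)))) := by
  obtain ⟨C, hC, hbound⟩ := exists_min_one_rpow_le_log_rpow_mul_integral
    (volume : Measure (EuclideanSpace ℝ (Fin d))) hp hq
  refine ⟨C, hC, fun u hu x y r hxy hr => ?_⟩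
  simpa only [closedAnnulus, logWeight, finrank_euclideanSpace_fin, ← div_eq_mul_inv]
    using hbound u hu.aestronglyMeasurable x y r hxy hr
end

section
/- For any u in L^1_loc(R^d), any q>0, any points x,y ∈ R^d, and any s ≥ 2|x-y|, one has min(1,|u(x)-u(y)|^q) ≤ C(d,q) · ( ⨍_{B_{3s}(0)\B_s(0)} min(1,|u(x+h)-u(x)|^q) dh + ⨍_{B_{3s}(0)\B_s(0)} min(1,|u(y+h)-u(y)|^q) dh ), where ⨍ denotes the average integral. -/
/-!
Put `c = x - y`, so `‖c‖ ≤ s / 2`, and let `B` be a closed ball of radius `s / 2` centred at a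
point of norm `2 s`. For `h ∈ B` both `h` and `h + c` lie in the annulus `A = {s ≤ ‖h‖ ≤ 3 s}`,
and `u x - u y = (u x - u (x + h)) + (u (y + (h + c)) - u y)`. The truncated power
`t ↦ min 1 (|t| ^ q)` is subadditive up to the factor `2 ^ q`; averaging the resulting pointwise
bound over `h ∈ B` and enlarging `B` to `A`, which costs the factor `|A| / |B| ≤ 6 ^ d`, gives
the inequality with `C = 2 ^ q * 6 ^ d`.
-/

open MeasureTheory Real Metric Set Module

lemma min_one_rpow_abs_add_le {q : ℝ} (hq : 0 ≤ q) (a b : ℝ) :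
    min 1 (|a + b| ^ q) ≤ 2 ^ q * (min 1 (|a| ^ q) + min 1 (|b| ^ q)) := by
  have h2q : (0 : ℝ) ≤ 2 ^ q := rpow_nonneg zero_le_two q
  have hnonneg : ∀ t : ℝ, 0 ≤ min 1 (|t| ^ q) :=
    fun t => le_min zero_le_one (rpow_nonneg (abs_nonneg t) q)
  have dominant : ∀ a b : ℝ, |a| ≤ |b| → min 1 (|a + b| ^ q) ≤ 2 ^ q * min 1 (|b| ^ q) := by
    intro a b hab
    calc min 1 (|a + b| ^ q) ≤ min 1 ((2 * |b|) ^ q) :=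
          min_le_min_left _ <|
            rpow_le_rpow (abs_nonneg _) (by linarith [abs_add_le a b]) hq
      _ = min 1 (2 ^ q * |b| ^ q) := by rw [mul_rpow zero_le_two (abs_nonneg b)]
      _ ≤ min (2 ^ q) (2 ^ q * |b| ^ q) := min_le_min_right _ (one_le_rpow one_le_two hq)
      _ = 2 ^ q * min 1 (|b| ^ q) := by rw [mul_min_of_nonneg _ _ h2q, mul_one]
  rcases le_total |a| |b| with hab | hba
  · nlinarith [dominant a b hab, hnonneg a]
  · rw [add_comm a b]
    nlinarith [dominant b a hba, hnonneg b]

lemma min_one_rpow_abs_sub_le {G : Type*} [Add G] {q : ℝ} (hq : 0 ≤ q) (u : G → ℝ)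
    {x y h h' : G} (hh : x + h = y + h') :
    min 1 (|u x - u y| ^ q) ≤
      2 ^ q * min 1 (|u (x + h) - u x| ^ q) + 2 ^ q * min 1 (|u (y + h') - u y| ^ q) := by
  have := min_one_rpow_abs_add_le hq (u x - u (x + h)) (u (x + h) - u y)
  rw [← mul_add, ← hh]
  rwa [sub_add_sub_cancel, abs_sub_comm (u x) (u (x + h))] at this

section Annulus

variable {E : Type*} [NormedAddCommGroup E]

def annulus (r R : ℝ) : Set E := {h | r ≤ ‖h‖ ∧ ‖h‖ ≤ R}

lemma annulus_subset_closedBall (r R : ℝ) : annulus r R ⊆ closedBall (0 : E) R :=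
  fun _ hh => mem_closedBall_zero_iff.2 hh.2

lemma add_mem_annulus_of_mem_closedBall {s : ℝ} {p c h : E} (hp : ‖p‖ = 2 * s)
    (hc : ‖c‖ ≤ s / 2) (hh : h ∈ closedBall p (s / 2)) : h + c ∈ annulus s (3 * s) := by
  rw [mem_closedBall, dist_eq_norm] at hh
  have hdist : ‖h + c - p‖ ≤ s := by
    calc ‖h + c - p‖ = ‖(h - p) + c‖ := by rw [sub_add_eq_add_sub, add_sub_right_comm]
      _ ≤ ‖h - p‖ + ‖c‖ := norm_add_le _ _
      _ ≤ s := by linarith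
  have := abs_le.1 ((abs_norm_sub_norm_le (h + c) p).trans hdist)
  exact ⟨by linarith, by linarith⟩

variable [NormedSpace ℝ E] [FiniteDimensional ℝ E] [MeasurableSpace E] [BorelSpace E]
  (μ : Measure E) [μ.IsAddHaarMeasure]

lemma measureReal_annulus_le {s : ℝ} (hs : 0 ≤ s) (p : E) :
    μ.real (annulus s (3 * s)) ≤ 6 ^ finrank ℝ E * μ.real (closedBall p (s / 2)) := by
  calc μ.real (annulus s (3 * s)) ≤ μ.real (closedBall (0 : E) (3 * s)) :=
        measureReal_mono (annulus_subset_closedBall _ _) measure_closedBall_lt_top.ne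
    _ = 6 ^ finrank ℝ E * μ.real (closedBall p (s / 2)) := by
        rw [Measure.addHaar_real_closedBall' μ 0 (by positivity),
          Measure.addHaar_real_closedBall' μ p (by positivity),
          show 3 * s = 6 * (s / 2) by ring, mul_pow]
        ring

end Annulus

section Translation

variable {G : Type*} [MeasurableSpace G] [AddGroup G] [MeasurableAdd G] {μ : Measure G}

lemma measureReal_mul_le_setIntegral_add_setIntegral [μ.IsAddRightInvariant] {f g : G → ℝ}
    {A B : Set G} {c : G} {M : ℝ}
    (hf : IntegrableOn f A μ) (hg : IntegrableOn g A μ)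
    (hf0 : 0 ≤ᵐ[μ.restrict A] f) (hg0 : 0 ≤ᵐ[μ.restrict A] g)
    (hB : MeasurableSet B) (hBμ : μ B ≠ ⊤) (hBA : B ⊆ A) (hBcA : ∀ h ∈ B, h + c ∈ A)
    (hM : ∀ h ∈ B, M ≤ f h + g (h + c)) :
    μ.real B * M ≤ (∫ h in A, f h ∂μ) + ∫ h in A, g h ∂μ := by
  have hshift := measurePreserving_add_right μ c
  have hgc : IntegrableOn (fun h => g (h + c)) B μ :=
    ((hshift.integrableOn_comp_preimage (measurableEmbedding_addRight c)).2 hg).mono_set hBcA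
  calc μ.real B * M = ∫ _ in B, M ∂μ := by rw [setIntegral_const, smul_eq_mul]
    _ ≤ ∫ h in B, (f h + g (h + c)) ∂μ :=
        setIntegral_mono_on (integrableOn_const hBμ) ((hf.mono_set hBA).add hgc) hB hM
    _ = (∫ h in B, f h ∂μ) + ∫ h in (· + c) '' B, g h ∂μ := by
        rw [integral_add (hf.mono_set hBA) hgc,
          hshift.setIntegral_image_emb (measurableEmbedding_addRight c)]
    _ ≤ (∫ h in A, f h ∂μ) + ∫ h in A, g h ∂μ :=
        add_le_add (setIntegral_mono_set hf hf0 hBA.eventuallyLE)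
          (setIntegral_mono_set hg hg0 (image_subset_iff.2 hBcA).eventuallyLE)

lemma integrableOn_min_one_rpow_abs_sub [μ.IsAddLeftInvariant] {u : G → ℝ}
    (hu : AEStronglyMeasurable u μ) {q : ℝ} (hq : 0 ≤ q) (z : G) {A : Set G} (hA : μ A ≠ ⊤) :
    IntegrableOn (fun h => min 1 (|u (z + h) - u z| ^ q)) A μ := by
  have htrunc : Continuous fun t : ℝ => min 1 (|t| ^ q) :=
    continuous_const.min (continuous_abs.rpow_const fun _ => Or.inr hq)
  have hmeas : AEStronglyMeasurable (fun h => min 1 (|u (z + h) - u z| ^ q)) μ :=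
    htrunc.comp_aestronglyMeasurable <|
      (hu.comp_quasiMeasurePreserving (measurePreserving_add_left μ z).quasiMeasurePreserving).sub
        aestronglyMeasurable_const
  refine IntegrableOn.of_bound hA.lt_top hmeas.restrict 1 (ae_of_all _ fun h => ?_)
  rw [norm_eq_abs, abs_of_nonneg (le_min zero_le_one (rpow_nonneg (abs_nonneg _) q))]
  exact min_le_left _ _

end Translation

section Main

variable {E : Type*} [NormedAddCommGroup E] [NormedSpace ℝ E] [FiniteDimensional ℝ E]
  [MeasurableSpace E] [BorelSpace E] {μ : Measure E} [μ.IsAddHaarMeasure]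

theorem min_one_rpow_abs_sub_le_setAverage_annulus {u : E → ℝ} (hu : AEStronglyMeasurable u μ)
    {q : ℝ} (hq : 0 < q) {x y : E} {s : ℝ} (hs : 2 * dist x y ≤ s) :
    min 1 (|u x - u y| ^ q) ≤ 2 ^ q * 6 ^ finrank ℝ E *
      ((⨍ h in annulus s (3 * s), min 1 (|u (x + h) - u x| ^ q) ∂μ) +
        ⨍ h in annulus s (3 * s), min 1 (|u (y + h) - u y| ^ q) ∂μ) := by
  set A : Set E := annulus s (3 * s)
  set f : E → E → ℝ := fun z h => min 1 (|u (z + h) - u z| ^ q)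
  have hf0 : ∀ z h, 0 ≤ f z h := fun z h => le_min zero_le_one (rpow_nonneg (abs_nonneg _) q)
  set S := (⨍ h in A, f x h ∂μ) + ⨍ h in A, f y h ∂μ
  have hS : 0 ≤ S := add_nonneg (integral_nonneg (hf0 x)) (integral_nonneg (hf0 y))
  rcases eq_or_ne x y with rfl | hxy
  · rw [sub_self, abs_zero, zero_rpow hq.ne', min_eq_right zero_le_one]
    positivity
  have : Nontrivial E := ⟨⟨x, y, hxy⟩⟩
  have hs0 : 0 < s := by linarith [dist_pos.2 hxy]
  obtain ⟨p, hp⟩ := exists_norm_eq E (by positivity : 0 ≤ 2 * s)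
  set B := closedBall p (s / 2)
  have hAμ : μ A ≠ ⊤ :=
    ((measure_mono (annulus_subset_closedBall _ _)).trans_lt measure_closedBall_lt_top).ne
  have hBpos : 0 < μ.real B := ENNReal.toReal_pos
    (measure_closedBall_pos μ p (by positivity)).ne' measure_closedBall_lt_top.ne
  have hxyc : ‖x - y‖ ≤ s / 2 := by rw [← dist_eq_norm]; linarith
  have hbound : μ.real B * min 1 (|u x - u y| ^ q) ≤
      (∫ h in A, 2 ^ q * f x h ∂μ) + ∫ h in A, 2 ^ q * f y h ∂μ := by
    refine measureReal_mul_le_setIntegral_add_setIntegral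
      ((integrableOn_min_one_rpow_abs_sub hu hq.le x hAμ).const_mul _)
      ((integrableOn_min_one_rpow_abs_sub hu hq.le y hAμ).const_mul _)
      (ae_of_all _ fun h => by positivity) (ae_of_all _ fun h => by positivity)
      measurableSet_closedBall measure_closedBall_lt_top.ne
      (fun h hh => by
        simpa only [add_zero] using
          add_mem_annulus_of_mem_closedBall (c := 0) hp (by rw [norm_zero]; positivity) hh)
      (fun h hh => add_mem_annulus_of_mem_closedBall hp hxyc hh)
      (fun h _ => min_one_rpow_abs_sub_le hq.le u (by abel))
  rw [integral_const_mul, integral_const_mul, ← mul_add, ← measure_smul_setAverage _ hAμ,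
    ← measure_smul_setAverage _ hAμ, smul_eq_mul, smul_eq_mul, ← mul_add] at hbound
  refine le_of_mul_le_mul_left ?_ hBpos
  calc μ.real B * min 1 (|u x - u y| ^ q) ≤ 2 ^ q * (μ.real A * S) := hbound
    _ ≤ 2 ^ q * (6 ^ finrank ℝ E * μ.real B * S) := by
        gcongr
        exact measureReal_annulus_le μ hs0.le p
    _ = μ.real B * (2 ^ q * 6 ^ finrank ℝ E * S) := by ring

end Main

/-- averaging lemma over annuli. -/
theorem stmt1 (d : ℕ) (q : ℝ) (hq : 0 < q) :
    ∃ C : ℝ, 0 < C ∧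
      ∀ (u : EuclideanSpace ℝ (Fin d) → ℝ), LocallyIntegrable u volume →
      ∀ (x y : EuclideanSpace ℝ (Fin d)) (s : ℝ), 2 * dist x y ≤ s →
        min 1 (|u x - u y| ^ q) ≤
          C * ((⨍ h in {h : EuclideanSpace ℝ (Fin d) | s ≤ ‖h‖ ∧ ‖h‖ ≤ 3 * s},
                  min 1 (|u (x + h) - u x| ^ q)) +
               (⨍ h in {h : EuclideanSpace ℝ (Fin d) | s ≤ ‖h‖ ∧ ‖h‖ ≤ 3 * s},
                  min 1 (|u (y + h) - u y| ^ q))) := by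
  refine ⟨2 ^ q * 6 ^ d, by positivity, fun u hu x y s hs => ?_⟩
  have := min_one_rpow_abs_sub_le_setAverage_annulus (μ := volume) hu.aestronglyMeasurable hq hs
  rwa [finrank_euclideanSpace_fin] at this
end

section
/- Let ρ ∈ C_c^∞(R^d) with ∫ρ = 1 and Fourier transform ρ̂, and let r > 0, ν_0 ∈ (0,1). Then there is a constant C_{ν_0} and c(ν_0,d) > 0 such that for all k ∈ Z^d: C_{ν_0} + ∫_0^{ν_0} |ρ̂(νk) − 1|^2 · log(1/ν)^{r−1} dν/ν ≥ c(ν_0,d) · log(2+|k|)^r. -/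
open MeasureTheory Real

lemma aux_exp_bound (t : ℝ) : ‖Complex.exp (-Complex.I * t) - 1‖ ≤ |t| := by
  have h : Complex.exp (-Complex.I * t) = Complex.exp ((-t : ℝ) * Complex.I) := by
    push_cast; ring_nf
  rw [h, Complex.exp_mul_I]
  set z : ℂ := Complex.cos (-t : ℝ) + Complex.sin (-t : ℝ) * Complex.I - 1 with hz
  have hre : z.re = Real.cos (-t) - 1 := by simp [hz, Complex.cos_ofReal_re]
  have him : z.im = Real.sin (-t) := by simp [hz, Complex.sin_ofReal_re]
  have key : ‖z‖ ^ 2 ≤ t ^ 2 := by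
    rw [Complex.sq_norm, Complex.normSq_apply, hre, him]
    have h1 : 1 - (-t) ^ 2 / 2 ≤ Real.cos (-t) := Real.one_sub_sq_div_two_le_cos
    have h2 := Real.sin_sq_add_cos_sq (-t)
    nlinarith [Real.cos_le_one (-t)]
  nlinarith [sq_abs t, abs_nonneg t, norm_nonneg z, sq_nonneg (‖z‖ - |t|), sq_nonneg (‖z‖ + |t|)]

lemma aux_poly_bound (s t₀ : ℝ) (ht₀ : 0 < t₀) :
    ∃ B : ℝ, ∀ t : ℝ, t₀ ≤ t → Real.exp (-t) * t ^ s ≤ B := by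
  rcases le_or_gt s 0 with hs | hs
  · refine ⟨t₀ ^ s, fun t ht => ?_⟩
    have ht' : 0 < t := ht₀.trans_le ht
    have h1 : Real.exp (-t) ≤ 1 := by
      rw [Real.exp_le_one_iff]; linarith
    have h2 : t ^ s ≤ t₀ ^ s := Real.rpow_le_rpow_of_nonpos ht₀ ht hs
    calc Real.exp (-t) * t ^ s ≤ 1 * (t₀ ^ s) :=
          mul_le_mul h1 h2 (Real.rpow_nonneg ht'.le s) zero_le_one
      _ = t₀ ^ s := one_mul _
  · set n : ℕ := ⌈s⌉₊ with hn
    refine ⟨1 + n.factorial, fun t ht => ?_⟩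
    have ht' : 0 < t := ht₀.trans_le ht
    have hexp : Real.exp (-t) ≤ 1 := by rw [Real.exp_le_one_iff]; linarith
    rcases le_or_gt t 1 with h1 | h1
    · have : t ^ s ≤ 1 := Real.rpow_le_one ht'.le h1 hs.le
      have hfac : (0:ℝ) ≤ n.factorial := Nat.cast_nonneg _
      nlinarith [Real.exp_pos (-t), Real.rpow_nonneg ht'.le s]
    · have hts : t ^ s ≤ t ^ (n:ℝ) :=
        Real.rpow_le_rpow_of_exponent_le h1.le (Nat.le_ceil s)
      have htn : t ^ (n:ℝ) = t ^ n := Real.rpow_natCast t n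
      have hpow : t ^ n ≤ n.factorial * Real.exp t := by
        have := Real.pow_div_factorial_le_exp t ht'.le n
        have hfac : (0:ℝ) < n.factorial := by positivity
        rw [div_le_iff₀ hfac] at this
        linarith [this]
      have step : Real.exp (-t) * t ^ s ≤ Real.exp (-t) * (n.factorial * Real.exp t) := by
        apply mul_le_mul_of_nonneg_left _ (Real.exp_pos (-t)).le
        rw [← htn] at hpow; linarith
      rw [Real.exp_neg] at step ⊢
      have hE : (Real.exp t)⁻¹ * ((n.factorial : ℝ) * Real.exp t) = n.factorial := by
        field_simp
      rw [hE] at step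
      linarith

set_option maxHeartbeats 1000000 in
/-- lower bound on the mollifier multiplier:
`C_{ν₀} + ∫_0^{ν₀} |ρ̂(νk) − 1|² log(1/ν)^{r−1} dν/ν ≳ log(2+|k|)^r`. -/
theorem stmt7 (d : ℕ) (ρ : EuclideanSpace ℝ (Fin d) → ℝ)
    (hρs : ContDiff ℝ (⊤ : ℕ∞) ρ) (hρc : HasCompactSupport ρ) (hρ1 : ∫ x, ρ x = 1)
    (r ν₀ : ℝ) (hr : 0 < r) (hν₀ : 0 < ν₀) (hν₀1 : ν₀ < 1) :
    ∃ C c : ℝ, 0 < c ∧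
      ∀ k : Fin d → ℤ,
        c * (Real.log (2 + Real.sqrt (∑ i, ((k i : ℝ))^2))) ^ r ≤
          C + ∫ ν in Set.Ioo (0:ℝ) ν₀,
            ‖(∫ x : EuclideanSpace ℝ (Fin d),
                (ρ x : ℂ) * Complex.exp (-Complex.I * (∑ i, x i * (ν * k i)))) - 1‖^2 *
              (Real.log (1/ν)) ^ (r - 1) / ν := by
  have hρcont : Continuous ρ := hρs.continuous
  have hρint : Integrable ρ := hρcont.integrable_of_hasCompactSupport hρc
  have hρC : Integrable (fun x => (ρ x : ℂ)) := hρint.ofReal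
  set G : EuclideanSpace ℝ (Fin d) → ℂ :=
    fun ξ => ∫ x : EuclideanSpace ℝ (Fin d),
      (ρ x : ℂ) * Complex.exp (-Complex.I * ((inner ℝ x ξ : ℝ) : ℂ)) with hGdef
  have hnormexp : ∀ a : ℝ, ‖Complex.exp (-Complex.I * (a:ℂ))‖ = 1 := by
    intro a; rw [Complex.norm_exp]; simp
  -- continuity of G
  have hGcont : Continuous G := by
    apply continuous_of_dominated (bound := fun x => ‖ρ x‖)
    · intro ξ
      exact ((Complex.continuous_ofReal.comp hρcont).mul (Complex.continuous_exp.comp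
        (continuous_const.mul (Complex.continuous_ofReal.comp
          (continuous_id.inner continuous_const))))).aestronglyMeasurable
    · intro ξ
      refine Filter.Eventually.of_forall fun x => ?_
      rw [norm_mul, hnormexp, mul_one, Complex.norm_real]
    · exact hρint.norm
    · refine Filter.Eventually.of_forall fun x => ?_
      exact continuous_const.mul (Complex.continuous_exp.comp
        (continuous_const.mul (Complex.continuous_ofReal.comp
          (continuous_const.inner continuous_id))))
  have hcoe : ∫ x : EuclideanSpace ℝ (Fin d), ((ρ x : ℝ) : ℂ) = ↑(∫ x, ρ x) := integral_ofReal
  -- value at 0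
  have hG0 : G 0 = 1 := by
    simp only [hGdef, inner_zero_right, Complex.ofReal_zero, mul_zero, Complex.exp_zero, mul_one]
    rw [hcoe, hρ1, Complex.ofReal_one]
  -- Lipschitz bound
  set L : ℝ := ∫ x : EuclideanSpace ℝ (Fin d), ‖ρ x‖ * ‖x‖ with hLdef
  have hxρint : Integrable (fun x : EuclideanSpace ℝ (Fin d) => ‖ρ x‖ * ‖x‖) :=
    (hρcont.norm.mul continuous_norm).integrable_of_hasCompactSupport (hρc.norm.mul_right)
  have hL0 : 0 ≤ L := integral_nonneg fun x => by positivity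
  have hexp_int : ∀ ξ : EuclideanSpace ℝ (Fin d),
      Integrable (fun x => (ρ x : ℂ) * Complex.exp (-Complex.I * ((inner ℝ x ξ : ℝ) : ℂ))) := by
    intro ξ
    have := hρC.bdd_mul (c := 1) (f := fun x : EuclideanSpace ℝ (Fin d) =>
        Complex.exp (-Complex.I * ((inner ℝ x ξ : ℝ) : ℂ)))
      ((Complex.continuous_exp.comp (continuous_const.mul (Complex.continuous_ofReal.comp
        (continuous_id.inner continuous_const)))).aestronglyMeasurable)
      (Filter.Eventually.of_forall fun x => le_of_eq (hnormexp _))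
    simpa [mul_comm] using this
  have hGlip : ∀ ξ : EuclideanSpace ℝ (Fin d), ‖G ξ - 1‖ ≤ L * ‖ξ‖ := by
    intro ξ
    have h1 : G ξ - 1 = ∫ x : EuclideanSpace ℝ (Fin d),
        (ρ x : ℂ) * (Complex.exp (-Complex.I * ((inner ℝ x ξ : ℝ) : ℂ)) - 1) := by
      simp only [mul_sub, mul_one]
      rw [integral_sub (hexp_int ξ) hρC, hcoe, hρ1, Complex.ofReal_one]
    rw [h1]
    have h2 : ‖∫ x : EuclideanSpace ℝ (Fin d),
        (ρ x : ℂ) * (Complex.exp (-Complex.I * ((inner ℝ x ξ : ℝ) : ℂ)) - 1)‖ ≤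
        ∫ x : EuclideanSpace ℝ (Fin d), ‖ρ x‖ * ‖x‖ * ‖ξ‖ := by
      apply norm_integral_le_of_norm_le (hxρint.mul_const ‖ξ‖)
      refine Filter.Eventually.of_forall fun x => ?_
      rw [norm_mul, Complex.norm_real]
      have h3 := aux_exp_bound (inner ℝ x ξ : ℝ)
      have h4 : |(inner ℝ x ξ : ℝ)| ≤ ‖x‖ * ‖ξ‖ := abs_real_inner_le_norm x ξ
      calc ‖ρ x‖ * ‖Complex.exp (-Complex.I * ((inner ℝ x ξ : ℝ) : ℂ)) - 1‖
          ≤ ‖ρ x‖ * (‖x‖ * ‖ξ‖) :=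
            mul_le_mul_of_nonneg_left (h3.trans h4) (norm_nonneg _)
        _ = ‖ρ x‖ * ‖x‖ * ‖ξ‖ := by ring
    rwa [integral_mul_const] at h2
  -- Riemann-Lebesgue
  have hRL : Filter.Tendsto G (Filter.cocompact _) (nhds 0) := by
    have h1 := tendsto_integral_exp_inner_smul_cocompact
      (f := fun x : EuclideanSpace ℝ (Fin d) => (ρ x : ℂ))
    have h2π : (2 * π : ℝ) ≠ 0 := by positivity
    have hπ : ((2 * π)⁻¹ : ℝ) ≠ 0 := inv_ne_zero h2π
    have h2 : Filter.Tendsto (fun ξ : EuclideanSpace ℝ (Fin d) => ((2 * π)⁻¹ : ℝ) • ξ)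
        (Filter.cocompact _) (Filter.cocompact _) := by
      have h3 := (Homeomorph.smulOfNeZero ((2 * π)⁻¹ : ℝ) hπ
        (α := EuclideanSpace ℝ (Fin d))).map_cocompact
      conv_rhs => rw [← h3]
      exact Filter.tendsto_map
    have h4 := h1.comp h2
    refine h4.congr fun ξ => ?_
    refine integral_congr_ae (Filter.Eventually.of_forall fun v => ?_)
    simp only [Circle.smul_def, Real.fourierChar_apply, smul_eq_mul, real_inner_smul_right]
    rw [mul_comm]
    congr 2
    have hπC : (π : ℂ) ≠ 0 := Complex.ofReal_ne_zero.mpr Real.pi_ne_zero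
    push_cast
    field_simp
  -- extract M
  obtain ⟨M, hM1, hM⟩ : ∃ M : ℝ, 1 ≤ M ∧
      ∀ ξ : EuclideanSpace ℝ (Fin d), M ≤ ‖ξ‖ → (1:ℝ)/2 ≤ ‖G ξ - 1‖ := by
    have hhalf : ∀ᶠ ξ in Filter.cocompact (EuclideanSpace ℝ (Fin d)), ‖G ξ‖ < 1/2 := by
      have := Metric.tendsto_nhds.mp hRL (1/2) (by norm_num)
      simpa [dist_zero_right] using this
    obtain ⟨t, ht_compact, ht⟩ := Filter.mem_cocompact.mp hhalf
    obtain ⟨Rb, hRb⟩ := ht_compact.isBounded.subset_closedBall 0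
    refine ⟨max 1 (Rb + 1), le_max_left _ _, fun ξ hξ => ?_⟩
    have hξ1 : Rb + 1 ≤ ‖ξ‖ := le_trans (le_max_right _ _) hξ
    have hξt : ξ ∉ t := by
      intro h
      have := hRb h
      rw [Metric.mem_closedBall, dist_zero_right] at this
      linarith
    have hGξ : ‖G ξ‖ < 1/2 := ht hξt
    calc (1:ℝ)/2 = 1 - 1/2 := by norm_num
      _ ≤ ‖(1:ℂ)‖ - ‖G ξ‖ := by rw [norm_one]; linarith
      _ ≤ ‖(1:ℂ) - G ξ‖ := norm_sub_norm_le _ _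
      _ = ‖G ξ - 1‖ := norm_sub_rev _ _
  -- constants
  set t₀ : ℝ := Real.log (1/ν₀) with ht₀def
  have ht₀ : 0 < t₀ := Real.log_pos (one_lt_one_div hν₀ hν₀1)
  have hlogpos : ∀ {ν : ℝ}, 0 < ν → ν < 1 → 0 < Real.log (1/ν) :=
    fun h0 h1 => Real.log_pos (one_lt_one_div h0 h1)
  obtain ⟨B, hB⟩ := aux_poly_bound (r - 1) t₀ ht₀
  set R : ℝ := max (2 * M / ν₀) (max (M ^ 2) 2) with hRdef
  have hR2 : (2:ℝ) ≤ R := le_max_of_le_right (le_max_right _ _)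
  have hRM2 : M ^ 2 ≤ R := le_max_of_le_right (le_max_left _ _)
  have hRMν : 2 * M / ν₀ ≤ R := le_max_left _ _
  set c : ℝ := (1 / (4 * r)) * (1 / 4 : ℝ) ^ r with hcdef
  have hc : 0 < c := by
    apply mul_pos (by positivity)
    exact Real.rpow_pos_of_pos (by norm_num) r
  have hlog2R : 0 ≤ Real.log (2 + R) := Real.log_nonneg (by linarith)
  refine ⟨(1 / (4 * r)) * t₀ ^ r + c * (Real.log (2 + R)) ^ r, c, hc, fun k => ?_⟩
  set K : EuclideanSpace ℝ (Fin d) := (WithLp.equiv 2 (Fin d → ℝ)).symm (fun i => (k i : ℝ))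
    with hKdef
  have hKnorm : Real.sqrt (∑ i, ((k i : ℝ)) ^ 2) = ‖K‖ := by
    rw [EuclideanSpace.norm_eq]
    congr 1
    refine Finset.sum_congr rfl fun i _ => ?_
    rw [hKdef, WithLp.equiv_symm_apply, PiLp.toLp_apply, Real.norm_eq_abs, sq_abs]
  rw [hKnorm]
  -- rewrite the inner integral
  have hinner : ∀ ν : ℝ, (∫ x : EuclideanSpace ℝ (Fin d),
      (ρ x : ℂ) * Complex.exp (-Complex.I * (∑ i, x i * (ν * k i)))) = G (ν • K) := by
    intro ν
    rw [hGdef]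
    refine integral_congr_ae (Filter.Eventually.of_forall fun x => ?_)
    have h1 : (inner ℝ x (ν • K) : ℝ) = ∑ i, x i * (ν * (k i : ℝ)) := by
      simp only [PiLp.inner_apply, PiLp.smul_apply, RCLike.inner_apply, conj_trivial, hKdef,
        WithLp.equiv_symm_apply, PiLp.toLp_apply, smul_eq_mul]
      exact Finset.sum_congr rfl fun i _ => by ring
    simp only [h1]
  have hIeq : (∫ ν in Set.Ioo (0:ℝ) ν₀,
      ‖(∫ x : EuclideanSpace ℝ (Fin d),
          (ρ x : ℂ) * Complex.exp (-Complex.I * (∑ i, x i * (ν * k i)))) - 1‖^2 *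
        (Real.log (1/ν)) ^ (r - 1) / ν)
      = ∫ ν in Set.Ioo (0:ℝ) ν₀, ‖G (ν • K) - 1‖^2 * (Real.log (1/ν)) ^ (r - 1) / ν := by
    refine integral_congr_ae (Filter.Eventually.of_forall fun ν => ?_)
    exact congrArg (fun z : ℂ => ‖z - 1‖^2 * (Real.log (1/ν)) ^ (r - 1) / ν) (hinner ν)
  rw [hIeq]
  set H : ℝ → ℝ := fun ν => ‖G (ν • K) - 1‖^2 * (Real.log (1/ν)) ^ (r - 1) / ν with hHdef
  have hνprop : ∀ ν ∈ Set.Ioo (0:ℝ) ν₀, 0 < ν ∧ ν < 1 :=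
    fun ν hν => ⟨hν.1, hν.2.trans hν₀1⟩
  have hHnonneg : ∀ ν ∈ Set.Ioo (0:ℝ) ν₀, 0 ≤ H ν := by
    intro ν hν; obtain ⟨h0, h1⟩ := hνprop ν hν
    have hl := (hlogpos h0 h1).le
    exact div_nonneg (mul_nonneg (by positivity) (Real.rpow_nonneg hl _)) h0.le
  have hHcont : ContinuousOn H (Set.Ioo (0:ℝ) ν₀) := by
    have hc1 : Continuous fun ν : ℝ => ‖G (ν • K) - 1‖^2 :=
      (((hGcont.comp (continuous_id.smul continuous_const)).sub continuous_const).norm).pow 2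
    intro ν hν; obtain ⟨h0, h1⟩ := hνprop ν hν
    apply ContinuousAt.continuousWithinAt
    have hca : ContinuousAt (fun ν : ℝ => Real.log (1/ν)) ν :=
      (Real.continuousAt_log (by positivity)).comp (continuousAt_const.div continuousAt_id h0.ne')
    have hrp : ContinuousAt (fun ν : ℝ => (Real.log (1/ν)) ^ (r - 1)) ν :=
      hca.rpow_const (Or.inl (hlogpos h0 h1).ne')
    exact ((hc1.continuousAt.mul hrp).div continuousAt_id h0.ne')
  have hHbound : ∀ ν ∈ Set.Ioo (0:ℝ) ν₀, H ν ≤ (L * ‖K‖)^2 * B := by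
    intro ν hν; obtain ⟨h0, h1⟩ := hνprop ν hν
    have hlν : 0 < Real.log (1/ν) := hlogpos h0 h1
    have ht : t₀ ≤ Real.log (1/ν) := by
      rw [ht₀def]
      apply Real.log_le_log (by positivity)
      exact one_div_le_one_div_of_le h0 hν.2.le
    have hn1 : ‖G (ν • K) - 1‖ ≤ L * (|ν| * ‖K‖) := by
      have := hGlip (ν • K)
      rwa [norm_smul, Real.norm_eq_abs] at this
    rw [abs_of_pos h0] at hn1
    have hn2 : ‖G (ν • K) - 1‖^2 ≤ (L*‖K‖)^2 * ν^2 := by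
      nlinarith [norm_nonneg (G (ν • K) - 1), hL0, norm_nonneg K, h0]
    have hexpν : Real.exp (-(Real.log (1/ν))) = ν := by
      rw [one_div, Real.log_inv, neg_neg, Real.exp_log h0]
    have hBν := hB _ ht
    rw [hexpν] at hBν
    calc H ν = ‖G (ν • K) - 1‖^2 * ((Real.log (1/ν)) ^ (r - 1) / ν) := by
          rw [hHdef]; ring
      _ ≤ ((L*‖K‖)^2 * ν^2) * ((Real.log (1/ν)) ^ (r - 1) / ν) :=
          mul_le_mul_of_nonneg_right hn2 (div_nonneg (Real.rpow_nonneg hlν.le _) h0.le)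
      _ = (L*‖K‖)^2 * (ν * (Real.log (1/ν)) ^ (r - 1)) := by field_simp
      _ ≤ (L*‖K‖)^2 * B := mul_le_mul_of_nonneg_left hBν (sq_nonneg _)
  have hHint : IntegrableOn H (Set.Ioo (0:ℝ) ν₀) := by
    have hmeas : AEStronglyMeasurable H (volume.restrict (Set.Ioo (0:ℝ) ν₀)) :=
      hHcont.aestronglyMeasurable measurableSet_Ioo
    refine Integrable.mono' (g := fun _ => (L*‖K‖)^2 * B) ?_ hmeas ?_
    · exact integrableOn_const measure_Ioo_lt_top.ne
    · rw [ae_restrict_iff' measurableSet_Ioo]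
      exact Filter.Eventually.of_forall fun ν hν => by
        rw [Real.norm_eq_abs, abs_of_nonneg (hHnonneg ν hν)]; exact hHbound ν hν
  rcases le_total ‖K‖ R with hKR | hRK
  · have hI0 : 0 ≤ ∫ ν in Set.Ioo (0:ℝ) ν₀, H ν :=
      setIntegral_nonneg measurableSet_Ioo hHnonneg
    have h1 : Real.log (2 + ‖K‖) ≤ Real.log (2 + R) :=
      Real.log_le_log (by positivity) (by linarith)
    have h2 : (Real.log (2 + ‖K‖))^r ≤ (Real.log (2 + R))^r :=
      Real.rpow_le_rpow (Real.log_nonneg (by linarith [norm_nonneg K])) h1 hr.le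
    have h3 : (0:ℝ) ≤ (1/(4*r)) * t₀ ^ r := by positivity
    linarith [mul_le_mul_of_nonneg_left h2 hc.le, hI0, h3]
  · set a : ℝ := M / ‖K‖ with hadef
    have hMpos : 0 < M := by linarith
    have hKpos : 0 < ‖K‖ := by nlinarith
    have ha0 : 0 < a := div_pos hMpos hKpos
    have h2Mν : 0 < 2 * M / ν₀ := by positivity
    have haν : a < ν₀ := by
      have step : a ≤ M / (2*M/ν₀) := by
        rw [hadef]
        apply div_le_div_of_nonneg_left hMpos.le h2Mν
        linarith
      have heq : M / (2*M/ν₀) = ν₀ / 2 := by field_simp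
      rw [heq] at step; linarith
    have hab : a ≤ ν₀ := haν.le
    set ψ : ℝ → ℝ := fun ν => (Real.log (1/ν)) ^ (r - 1) / ν with hψdef
    have hψprop : ∀ ν ∈ Set.Icc a ν₀, 0 < ν ∧ ν < 1 :=
      fun ν hν => ⟨ha0.trans_le hν.1, lt_of_le_of_lt hν.2 hν₀1⟩
    have hψcont : ContinuousOn ψ (Set.Icc a ν₀) := by
      intro ν hν; obtain ⟨h0, h1⟩ := hψprop ν hν
      apply ContinuousAt.continuousWithinAt
      have hca : ContinuousAt (fun ν : ℝ => Real.log (1/ν)) ν :=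
        (Real.continuousAt_log (by positivity)).comp
          (continuousAt_const.div continuousAt_id h0.ne')
      exact ((hca.rpow_const (Or.inl (hlogpos h0 h1).ne')).div
        continuousAt_id h0.ne' : ContinuousAt _ ν)
    have hψii : IntervalIntegrable ψ volume a ν₀ := by
      apply ContinuousOn.intervalIntegrable
      rwa [Set.uIcc_of_le hab]
    have hFTC : ∫ ν in a..ν₀, ψ ν = (Real.log (1/a)) ^ r / r - t₀ ^ r / r := by
      have hderiv : ∀ ν ∈ Set.uIcc a ν₀,
          HasDerivAt (fun ν : ℝ => -((-Real.log ν) ^ r / r)) (ψ ν) ν := by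
        intro ν hν
        rw [Set.uIcc_of_le hab] at hν
        obtain ⟨h0, h1⟩ := hψprop ν hν
        have hlp : 0 < -Real.log ν := by
          have := hlogpos h0 h1; rwa [one_div, Real.log_inv] at this
        have hd1 : HasDerivAt (fun ν : ℝ => -Real.log ν) (-ν⁻¹) ν :=
          (Real.hasDerivAt_log h0.ne').neg
        have hd2 := hd1.rpow_const (p := r) (Or.inl hlp.ne')
        have hd3 : HasDerivAt (fun ν : ℝ => -((-Real.log ν) ^ r / r)) _ ν := (hd2.div_const r).neg
        convert hd3 using 1
        show (Real.log (1/ν)) ^ (r - 1) / ν = -(-ν⁻¹ * r * (-Real.log ν) ^ (r - 1) / r)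
        rw [one_div, Real.log_inv]
        rw [mul_right_comm, mul_div_assoc, div_self hr.ne', mul_one, neg_mul, neg_neg, div_eq_inv_mul]
      rw [intervalIntegral.integral_eq_sub_of_hasDerivAt hderiv hψii]
      have e1 : Real.log ν₀ = -t₀ := by rw [ht₀def, one_div, Real.log_inv, neg_neg]
      have e2 : -Real.log a = Real.log (1/a) := by rw [one_div, Real.log_inv]
      rw [e1, neg_neg, e2]
      ring
    have hψnonneg : ∀ ν ∈ Set.Ioo a ν₀, 0 ≤ ψ ν := by
      intro ν hν
      obtain ⟨h0, h1⟩ := hψprop ν ⟨hν.1.le, hν.2.le⟩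
      exact div_nonneg (Real.rpow_nonneg (hlogpos h0 h1).le _) h0.le
    have hψIoo : IntegrableOn ψ (Set.Ioo a ν₀) :=
      ((intervalIntegrable_iff_integrableOn_Ioc_of_le hab).mp hψii).mono_set
        Set.Ioo_subset_Ioc_self
    have hHψ : ∀ ν ∈ Set.Ioo a ν₀, (1/4 : ℝ) * ψ ν ≤ H ν := by
      intro ν hν
      obtain ⟨h0, h1⟩ := hψprop ν ⟨hν.1.le, hν.2.le⟩
      have hMν : M ≤ ‖ν • K‖ := by
        rw [norm_smul, Real.norm_eq_abs, abs_of_pos h0]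
        have hM' : M = a * ‖K‖ := (div_mul_cancel₀ M hKpos.ne').symm
        rw [hM']
        exact mul_le_mul_of_nonneg_right hν.1.le (norm_nonneg K)
      have h12 := hM _ hMν
      have hsq : (1/4 : ℝ) ≤ ‖G (ν • K) - 1‖^2 := by
        nlinarith [norm_nonneg (G (ν • K) - 1)]
      calc (1/4:ℝ) * ψ ν ≤ ‖G (ν • K) - 1‖^2 * ψ ν :=
            mul_le_mul_of_nonneg_right hsq (hψnonneg ν hν)
        _ = H ν := by rw [hHdef, hψdef]; ring
    have step1 : ∫ ν in Set.Ioo a ν₀, (1/4:ℝ) * ψ ν ≤ ∫ ν in Set.Ioo a ν₀, H ν :=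
      setIntegral_mono_on (hψIoo.const_mul _)
        (hHint.mono_set (Set.Ioo_subset_Ioo ha0.le le_rfl)) measurableSet_Ioo hHψ
    have step2 : ∫ ν in Set.Ioo a ν₀, H ν ≤ ∫ ν in Set.Ioo (0:ℝ) ν₀, H ν := by
      apply setIntegral_mono_set hHint
      · filter_upwards [ae_restrict_mem measurableSet_Ioo] with ν hν
        exact hHnonneg ν hν
      · exact (Set.Ioo_subset_Ioo ha0.le le_rfl).eventuallyLE
    have step3 : ∫ ν in Set.Ioo a ν₀, (1/4:ℝ) * ψ ν
        = (1/4:ℝ) * ((Real.log (1/a))^r/r - t₀^r/r) := by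
      rw [integral_const_mul, ← integral_Ioc_eq_integral_Ioo,
        ← intervalIntegral.integral_of_le hab, hFTC]
    have hlK : 0 < Real.log ‖K‖ := Real.log_pos (by linarith)
    have hl2K : 0 ≤ Real.log (2 + ‖K‖) := Real.log_nonneg (by linarith)
    have key5 : (1/4:ℝ) * Real.log (2 + ‖K‖) ≤ Real.log (1/a) := by
      have hal : Real.log (1/a) = Real.log ‖K‖ - Real.log M := by
        rw [hadef, one_div_div, Real.log_div hKpos.ne' hMpos.ne']
      have l1 : Real.log (M^2) = 2 * Real.log M := by
        rw [Real.log_pow]; norm_num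
      have l2 : 2 * Real.log M ≤ Real.log ‖K‖ := by
        rw [← l1]; exact Real.log_le_log (by positivity) (le_trans hRM2 hRK)
      have l3 : Real.log (2 + ‖K‖) ≤ 2 * Real.log ‖K‖ := by
        have hsq : 2 + ‖K‖ ≤ ‖K‖^2 := by nlinarith
        calc Real.log (2 + ‖K‖) ≤ Real.log (‖K‖^2) := Real.log_le_log (by linarith) hsq
          _ = 2 * Real.log ‖K‖ := by rw [Real.log_pow]; norm_num
      have l4 : 0 ≤ Real.log M := Real.log_nonneg hM1
      rw [hal]; linarith
    have key6 : ((1/4:ℝ) * Real.log (2 + ‖K‖)) ^ r ≤ (Real.log (1/a)) ^ r :=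
      Real.rpow_le_rpow (by positivity) key5 hr.le
    have key7 : ((1/4:ℝ) * Real.log (2 + ‖K‖)) ^ r
        = (1/4:ℝ)^r * (Real.log (2 + ‖K‖))^r :=
      Real.mul_rpow (by norm_num) hl2K
    have e3 : (1/4:ℝ) * ((Real.log (1/a))^r/r - t₀^r/r)
        = (1/(4*r)) * (Real.log (1/a))^r - (1/(4*r)) * t₀^r := by
      field_simp
    have e4 : c * (Real.log (2+‖K‖))^r ≤ (1/(4*r)) * (Real.log (1/a))^r := by
      rw [hcdef]
      calc (1/(4*r)) * (1/4:ℝ)^r * (Real.log (2+‖K‖))^r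
          = (1/(4*r)) * ((1/4:ℝ)^r * (Real.log (2+‖K‖))^r) := by ring
        _ = (1/(4*r)) * (((1/4:ℝ) * Real.log (2+‖K‖))^r) := by rw [key7]
        _ ≤ (1/(4*r)) * (Real.log (1/a))^r :=
            mul_le_mul_of_nonneg_left key6 (by positivity)
    have e5 : 0 ≤ c * (Real.log (2+R))^r := mul_nonneg hc.le (Real.rpow_nonneg hlog2R _)
    linarith [step1, step2, step3, e3, e4, e5]
end

section
/- For every p > 1 and all ν, t > 0 with νt ≤ 1, the inequality log(1/(νt)+e) / log( log((νt)^{-1}+e)^{1/2}/√(νt) + 2 )^p ≤ 2^p / log(1/(νt)+4)^{p-1} holds; in particular log(1/(νt)+e)/log(1/√(νt)+2)^p ≤ 2^p/log(1/(νt)+4)^{p-1}. -/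
open Real

/-! With `x = νt`, put `A = log (1/x + e)`, `B = log (1/x + 4)` and `C = log (1/√x + 2)`.
Then `A ≤ B`, and `B ≤ 2C` because `(1/√x + 2)² ≥ 1/x + 4`; hence `A B^(p-1) ≤ Bᵖ ≤ 2ᵖ Cᵖ`,
which is the second inequality. The first follows from it, since `A ≥ 1` makes its
denominator at least `Cᵖ`. -/

lemma div_rpow_le_two_rpow_div_rpow_sub_one {p a b c : ℝ} (hp : 0 ≤ p) (hab : a ≤ b)
    (hb : 0 < b) (hbc : b ≤ 2 * c) : a / c ^ p ≤ 2 ^ p / b ^ (p - 1) := by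
  have hc : 0 < c := by linarith
  rw [div_le_div_iff₀ (rpow_pos_of_pos hc p) (rpow_pos_of_pos hb (p - 1))]
  calc a * b ^ (p - 1) ≤ b * b ^ (p - 1) := by gcongr
    _ = b ^ p := by rw [rpow_sub_one hb.ne', mul_div_cancel₀ _ hb.ne']
    _ ≤ (2 * c) ^ p := rpow_le_rpow hb.le hbc hp
    _ = 2 ^ p * c ^ p := mul_rpow zero_le_two hc.le

lemma one_le_log_add_exp_one {y : ℝ} (hy : 0 ≤ y) : 1 ≤ log (y + exp 1) := by
  rw [le_log_iff_exp_le (by positivity)]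
  linarith

lemma log_add_exp_one_le_log_add_four {y : ℝ} (hy : 0 ≤ y) : log (y + exp 1) ≤ log (y + 4) :=
  log_le_log (by positivity) (by linarith [exp_one_lt_d9])

lemma log_sq_add_four_le_two_mul_log_add_two {s : ℝ} (hs : 0 ≤ s) :
    log (s ^ 2 + 4) ≤ 2 * log (s + 2) := by
  calc log (s ^ 2 + 4) ≤ log ((s + 2) ^ 2) := log_le_log (by positivity) (by nlinarith)
    _ = 2 * log (s + 2) := by rw [log_pow]; norm_num

theorem stmt13_general (p ν t : ℝ) (hp : 1 < p) (hν : 0 < ν) (ht : 0 < t) :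
    Real.log (1/(ν*t) + Real.exp 1) /
        (Real.log (Real.sqrt (Real.log (1/(ν*t) + Real.exp 1)) / Real.sqrt (ν*t) + 2)) ^ p ≤
      (2:ℝ) ^ p / (Real.log (1/(ν*t) + 4)) ^ (p-1) ∧
    Real.log (1/(ν*t) + Real.exp 1) / (Real.log (1/Real.sqrt (ν*t) + 2)) ^ p ≤
      (2:ℝ) ^ p / (Real.log (1/(ν*t) + 4)) ^ (p-1) := by
  set x := ν * t
  have hx : 0 < x := mul_pos hν ht
  have hsx : 0 < √x := sqrt_pos.mpr hx
  have hA : 1 ≤ log (1 / x + exp 1) := one_le_log_add_exp_one (by positivity)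
  have hB : 0 < log (1 / x + 4) := log_pos (by linarith [one_div_pos.mpr hx])
  have hC : 0 < log (1 / √x + 2) := log_pos (by linarith [one_div_pos.mpr hsx])
  have hBC : log (1 / x + 4) ≤ 2 * log (1 / √x + 2) := by
    have := log_sq_add_four_le_two_mul_log_add_two (one_div_pos.mpr hsx).le
    rwa [div_pow, one_pow, sq_sqrt hx.le] at this
  have second := div_rpow_le_two_rpow_div_rpow_sub_one (p := p) (by linarith)
    (log_add_exp_one_le_log_add_four (one_div_pos.mpr hx).le) hB hBC
  have hCD : log (1 / √x + 2) ≤ log (√(log (1 / x + exp 1)) / √x + 2) := by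
    have : 1 ≤ √(log (1 / x + exp 1)) := one_le_sqrt.mpr hA
    exact log_le_log (by positivity) (by gcongr)
  refine ⟨le_trans ?_ second, second⟩
  exact div_le_div_of_nonneg_left (by linarith) (rpow_pos_of_pos hC p)
    (rpow_le_rpow hC.le hCD (by linarith))

/-- the elementary logarithmic inequalities used in the choice of the
frequency cutoff in the dissipation estimate. -/
theorem stmt13 (p ν t : ℝ) (hp : 1 < p) (hν : 0 < ν) (ht : 0 < t) (h : ν * t ≤ 1) :
    Real.log (1/(ν*t) + Real.exp 1) /
        (Real.log (Real.sqrt (Real.log (1/(ν*t) + Real.exp 1)) / Real.sqrt (ν*t) + 2)) ^ p ≤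
      (2:ℝ) ^ p / (Real.log (1/(ν*t) + 4)) ^ (p-1) ∧
    Real.log (1/(ν*t) + Real.exp 1) / (Real.log (1/Real.sqrt (ν*t) + 2)) ^ p ≤
      (2:ℝ) ^ p / (Real.log (1/(ν*t) + 4)) ^ (p-1) :=
  stmt13_general p ν t hp hν ht
end

section
/- Let g : T^d → [0,∞) be measurable with g ∈ L^p(T^d) for some p > 1. Then ∫_{T^d} ∫_{|h|<1/10} 1_{{|h|^{1/2} e^{2g(x)} ≥ 2}} / (|h|^d log(1/|h|)^{1-p}) dh dx ≤ C(p,d) ‖g‖_{L^p}^p. -/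
/-!
The integrand in `h` vanishes unless `|h| ≥ e^{-4 g(x)}`, and there it equals
`|h|^{-d} log(1/|h|)^{p-1} ≤ (4 g(x))^{p-1} |h|^{-d}`. In polar coordinates the shell
`e^{-4 g(x)} ≤ |h| < 1` contributes `d |B_1| (4 g(x))^{p-1} ∫ dr / r = d |B_1| (4 g(x))^p`,
so the inner integral is at most `4^p d |B_1| g(x)^p`, and integrating in `x` gives the bound.
-/

open MeasureTheory Real ENNReal

/-- A fundamental domain for the torus `T^d = (ℝ/ℤ)^d`. -/
def torusBox (d : ℕ) : Set (EuclideanSpace ℝ (Fin d)) :=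
  {x | ∀ i, x i ∈ Set.Ico (0:ℝ) 1}

open Set Metric

noncomputable def truncatedLogKernel (d : ℕ) (p L : ℝ) : ℝ → ℝ≥0∞ :=
  (Ico (exp (-L)) 1).indicator fun r => ENNReal.ofReal (r ^ (-(d:ℝ)) * (-log r) ^ (p - 1))

lemma measurable_truncatedLogKernel (d : ℕ) (p L : ℝ) : Measurable (truncatedLogKernel d p L) :=
  Measurable.indicator (by fun_prop) measurableSet_Ico

lemma exp_neg_le_of_two_le_rpow_half_mul_exp {r A : ℝ} (hr : 0 ≤ r)
    (h : 2 ≤ r ^ (1/2 : ℝ) * exp (2 * A)) : exp (-(4 * A)) ≤ r := by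
  rw [← sqrt_eq_rpow] at h
  have hsq : exp (-(2 * A)) ≤ √r := by
    refine le_of_mul_le_mul_right ?_ (exp_pos (2 * A))
    rw [← exp_add, neg_add_cancel, exp_zero]
    linarith
  calc exp (-(4 * A)) = exp (-(2 * A)) ^ 2 := by rw [← exp_nat_mul]; ring_nf
    _ ≤ r := (le_sqrt (exp_pos _).le hr).1 hsq

lemma indicator_div_le_truncatedLogKernel (d : ℕ) (p A : ℝ) {r : ℝ} (hr : 0 ≤ r) (hr1 : r < 1) :
    (if (2:ℝ) ≤ r ^ ((1:ℝ)/2) * exp (2 * A) then (1:ℝ≥0∞) else 0) /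
        ENNReal.ofReal (r ^ (d:ℝ) * Real.log (1/r) ^ (1 - p)) ≤
      truncatedLogKernel d p (4 * A) r := by
  split_ifs with h
  · have hr' : exp (-(4 * A)) ≤ r := exp_neg_le_of_two_le_rpow_half_mul_exp hr h
    have hr0 : 0 < r := (exp_pos _).trans_le hr'
    have hlog : 0 < Real.log (1/r) := log_pos (one_lt_one_div hr0 hr1)
    rw [truncatedLogKernel, indicator_of_mem (show r ∈ Ico _ _ from ⟨hr', hr1⟩), one_div,
      ← ENNReal.ofReal_inv_of_pos (by positivity), mul_inv, ← rpow_neg hr0.le,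
      ← rpow_neg hlog.le, neg_sub, one_div, Real.log_inv]
  · simp

lemma rpow_pred_mul_truncatedLogKernel_le {d : ℕ} (hd : 1 ≤ d) {p L : ℝ} (hp : 1 ≤ p) (hL : 0 ≤ L)
    {y : ℝ} (hy : 0 < y) :
    ENNReal.ofReal (y ^ (d - 1)) * truncatedLogKernel d p L y ≤
      (Ico (exp (-L)) 1).indicator
        (fun y => ENNReal.ofReal (L ^ (p - 1)) * ENNReal.ofReal y⁻¹) y := by
  by_cases hmem : y ∈ Ico (exp (-L)) 1
  · rw [truncatedLogKernel, indicator_of_mem hmem, indicator_of_mem hmem,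
      ← ENNReal.ofReal_mul (by positivity), ← ENNReal.ofReal_mul (by positivity)]
    apply ENNReal.ofReal_le_ofReal
    have hlog : -log y ≤ L := by
      have := log_le_log (exp_pos _) hmem.1
      rw [log_exp] at this; linarith
    have hpow : y ^ (d - 1) * y ^ (-(d:ℝ)) = y⁻¹ := by
      rw [← Real.rpow_natCast, Nat.cast_sub hd, ← rpow_add hy, Nat.cast_one,
        show (d:ℝ) - 1 + -d = -1 by ring, Real.rpow_neg_one]
    calc y ^ (d - 1) * (y ^ (-(d:ℝ)) * (-log y) ^ (p - 1))
        = y⁻¹ * (-log y) ^ (p - 1) := by rw [← mul_assoc, hpow]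
      _ ≤ y⁻¹ * L ^ (p - 1) := by
          gcongr
          linarith [log_nonpos hy.le hmem.2.le]
      _ = _ := mul_comm _ _
  · simp [truncatedLogKernel, indicator_of_notMem hmem]

lemma lintegral_Ico_exp_neg_ofReal_inv {L : ℝ} (hL : 0 ≤ L) :
    ∫⁻ y in Ico (exp (-L)) 1, ENNReal.ofReal y⁻¹ = ENNReal.ofReal L := by
  have hle : exp (-L) ≤ 1 := exp_le_one_iff.2 (by linarith)
  have hint : IntegrableOn (fun y : ℝ => y⁻¹) (Ioc (exp (-L)) 1) := by
    rw [← intervalIntegrable_iff_integrableOn_Ioc_of_le hle]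
    exact intervalIntegral.intervalIntegrable_inv
      (fun x hx => ((exp_pos _).trans_le (uIcc_of_le hle ▸ hx).1).ne') continuousOn_id
  have hnonneg : 0 ≤ᵐ[volume.restrict (Ioc (exp (-L)) 1)] fun y : ℝ => y⁻¹ :=
    (ae_restrict_mem measurableSet_Ioc).mono fun _ hy =>
      inv_nonneg.2 ((exp_pos _).le.trans hy.1.le)
  rw [setLIntegral_congr Ico_ae_eq_Ioc, ← ofReal_integral_eq_lintegral_ofReal hint hnonneg,
    ← intervalIntegral.integral_of_le hle, integral_inv_of_pos (exp_pos _) one_pos, one_div,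
    ← exp_neg, neg_neg, log_exp]

lemma lintegral_rpow_pred_mul_truncatedLogKernel_le {d : ℕ} (hd : 1 ≤ d) {p L : ℝ} (hp : 1 ≤ p)
    (hL : 0 ≤ L) :
    ∫⁻ y in Ioi (0:ℝ), ENNReal.ofReal (y ^ (d - 1)) * truncatedLogKernel d p L y ≤
      ENNReal.ofReal (L ^ p) :=
  calc ∫⁻ y in Ioi (0:ℝ), ENNReal.ofReal (y ^ (d - 1)) * truncatedLogKernel d p L y
      ≤ ∫⁻ y in Ioi (0:ℝ), (Ico (exp (-L)) 1).indicator
          (fun y => ENNReal.ofReal (L ^ (p - 1)) * ENNReal.ofReal y⁻¹) y :=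
        setLIntegral_mono' measurableSet_Ioi fun _ hy =>
          rpow_pred_mul_truncatedLogKernel_le hd hp hL hy
    _ ≤ ∫⁻ y in Ico (exp (-L)) 1, ENNReal.ofReal (L ^ (p - 1)) * ENNReal.ofReal y⁻¹ :=
        (setLIntegral_le_lintegral _ _).trans_eq (lintegral_indicator measurableSet_Ico _)
    _ = ENNReal.ofReal (L ^ p) := by
        rw [lintegral_const_mul' _ _ ofReal_ne_top, lintegral_Ico_exp_neg_ofReal_inv hL,
          ← ENNReal.ofReal_mul (rpow_nonneg hL _), ← rpow_add_one' hL (by linarith), sub_add_cancel]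

section Polar

variable {E : Type*} [NormedAddCommGroup E] [NormedSpace ℝ E] [MeasurableSpace E] [BorelSpace E]
  [FiniteDimensional ℝ E] (μ : Measure E) [μ.IsAddHaarMeasure]

theorem lintegral_fun_norm_addHaar [Nontrivial E] {f : ℝ → ℝ≥0∞} (hf : Measurable f) :
    ∫⁻ x, f ‖x‖ ∂μ = Module.finrank ℝ E * μ (ball 0 1) *
      ∫⁻ y in Ioi (0:ℝ), ENNReal.ofReal (y ^ (Module.finrank ℝ E - 1)) * f y := by
  have hf' : Measurable fun q : sphere (0:E) 1 × Ioi (0:ℝ) => f q.2.1 := by fun_prop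
  calc ∫⁻ x, f ‖x‖ ∂μ = ∫⁻ x : ({(0:E)}ᶜ : Set E), f ‖x.1‖ ∂(μ.comap (↑)) := by
        rw [lintegral_subtype_comap (measurableSet_singleton 0).compl fun x => f ‖x‖,
          restrict_compl_singleton]
    _ = ∫⁻ q, f q.2.1 ∂(μ.toSphere.prod (Measure.volumeIoiPow (Module.finrank ℝ E - 1))) := by
        rw [← μ.measurePreserving_homeomorphUnitSphereProd.lintegral_comp hf']
        simp
    _ = _ := by
        rw [lintegral_prod _ hf'.aemeasurable]
        simp only [lintegral_const]
        rw [Measure.toSphere_apply_univ, mul_comm, Measure.volumeIoiPow,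
          lintegral_withDensity_eq_lintegral_mul _ (by fun_prop) (by fun_prop),
          ← lintegral_subtype_comap measurableSet_Ioi]
        rfl

lemma lintegral_truncatedLogKernel_norm_le {p L : ℝ} (hp : 1 ≤ p) (hL : 0 ≤ L) :
    ∫⁻ x, truncatedLogKernel (Module.finrank ℝ E) p L ‖x‖ ∂μ ≤
      Module.finrank ℝ E * μ (ball 0 1) * ENNReal.ofReal (L ^ p) := by
  rcases subsingleton_or_nontrivial E with hE | hE
  · have hzero : (0:ℝ) ∉ Ico (exp (-L)) 1 := fun h => (exp_pos _).not_ge h.1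
    simp [Subsingleton.elim _ (0:E), truncatedLogKernel, indicator_of_notMem hzero]
  · rw [lintegral_fun_norm_addHaar μ (measurable_truncatedLogKernel _ _ _)]
    gcongr
    exact lintegral_rpow_pred_mul_truncatedLogKernel_le Module.finrank_pos hp hL

end Polar

lemma lintegral_ball_indicator_div_le (d : ℕ) {p A : ℝ} (hp : 1 ≤ p) (hA : 0 ≤ A) :
    ∫⁻ h in ball (0 : EuclideanSpace ℝ (Fin d)) (1/10),
        (if (2:ℝ) ≤ ‖h‖ ^ ((1:ℝ)/2) * exp (2 * A) then (1:ℝ≥0∞) else 0) /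
          ENNReal.ofReal (‖h‖ ^ (d:ℝ) * Real.log (1/‖h‖) ^ (1 - p)) ≤
      d * volume (ball (0 : EuclideanSpace ℝ (Fin d)) 1) * ENNReal.ofReal ((4 * A) ^ p) :=
  calc _ ≤ ∫⁻ h in ball (0 : EuclideanSpace ℝ (Fin d)) (1/10),
          truncatedLogKernel d p (4 * A) ‖h‖ :=
        setLIntegral_mono' measurableSet_ball fun h hh =>
          indicator_div_le_truncatedLogKernel d p A (norm_nonneg h)
            ((mem_ball_zero_iff.1 hh).trans (by norm_num))
    _ ≤ ∫⁻ h : EuclideanSpace ℝ (Fin d), truncatedLogKernel d p (4 * A) ‖h‖ :=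
        setLIntegral_le_lintegral _ _
    _ ≤ _ := by
        simpa using lintegral_truncatedLogKernel_norm_le
          (volume : Measure (EuclideanSpace ℝ (Fin d))) hp (by positivity : 0 ≤ 4 * A)

/-- estimate of the "bad set" term by the `L^p` norm of `g`. -/
theorem stmt14 (d : ℕ) (p : ℝ) (hp : 1 < p) :
    ∃ C : ℝ, 0 < C ∧
      ∀ g : EuclideanSpace ℝ (Fin d) → ℝ, Measurable g → (∀ x, 0 ≤ g x) →
        (∀ x i, g (x + EuclideanSpace.single i 1) = g x) →
        (∫⁻ x in torusBox d,
          ∫⁻ h in Metric.ball (0 : EuclideanSpace ℝ (Fin d)) (1/10),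
            (if (2:ℝ) ≤ ‖h‖ ^ ((1:ℝ)/2) * Real.exp (2 * g x) then (1:ℝ≥0∞) else 0) /
              ENNReal.ofReal (‖h‖ ^ (d:ℝ) * (Real.log (1/‖h‖)) ^ (1 - p))) ≤
        ENNReal.ofReal C * ∫⁻ x in torusBox d, ENNReal.ofReal (g x ^ p) := by
  set K : ℝ≥0∞ := d * volume (ball (0 : EuclideanSpace ℝ (Fin d)) 1) * ENNReal.ofReal (4 ^ p)
  have hK : K ≠ ∞ := by finiteness
  refine ⟨K.toReal + 1, by positivity, fun g _ hg _ => ?_⟩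
  calc _ ≤ ∫⁻ x in torusBox d, K * ENNReal.ofReal (g x ^ p) := by
        refine lintegral_mono fun x => (lintegral_ball_indicator_div_le d hp.le (hg x)).trans_eq ?_
        rw [mul_rpow (by norm_num) (hg x), ENNReal.ofReal_mul (by positivity), ← mul_assoc]
    _ = K * ∫⁻ x in torusBox d, ENNReal.ofReal (g x ^ p) := lintegral_const_mul' _ _ hK
    _ ≤ _ := by
        gcongr
        exact (ENNReal.le_ofReal_iff_toReal_le hK (by positivity)).2 (by linarith)
end
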